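/- arXiv:1904.06150 — 7 statements merged into one kernel-verified Lean document; each statement's English description precedes it below -/
import Mathlib

section
/- For every real a > 1, the function x ↦ x · (a^{1/x} − 1) is strictly decreasing on the interval (0, ∞). In particular, for ε > 0 the competitive ratio expression m · (1+ε) · (((1+ε)/ε)^{1/m} − 1) is strictly decreasing in the integer m ≥ 1. -/
lemma aux_secant (u v : ℝ) (hu : 0 < u) (huv : u < v) :
    v * (Real.exp u - 1) < u * (Real.exp v - 1) := by
  have hv : 0 < v := hu.trans huv
  have hlt : u / v < 1 := (div_lt_one hv).mpr huv
  have hpos : 0 < u / v := by positivity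
  have h := strictConvexOn_exp.2 (Set.mem_univ (0:ℝ)) (Set.mem_univ v)
    (by linarith : (0:ℝ) ≠ v) (by linarith : 0 < 1 - u / v) hpos (by ring)
  simp only [smul_eq_mul, mul_zero, zero_add, Real.exp_zero, mul_one] at h
  rw [div_mul_cancel₀ _ (ne_of_gt hv)] at h
  have h2 := mul_lt_mul_of_pos_left h hv
  have e1 : v * ((1 - u / v) + u / v * Real.exp v) = v - u + u * Real.exp v := by
    field_simp
  nlinarith [h2, e1]

lemma aux_anti (a : ℝ) (ha : 1 < a) :
    StrictAntiOn (fun x : ℝ => x * (a ^ (1 / x) - 1)) (Set.Ioi 0) := by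
  intro x hx y hy hxy
  simp only [Set.mem_Ioi] at hx hy
  have ha0 : (0:ℝ) < a := by linarith
  have hb : 0 < Real.log a := Real.log_pos ha
  set b := Real.log a with hbdef
  have hrw : ∀ z : ℝ, 0 < z → a ^ (1/z) = Real.exp (b / z) := by
    intro z hz
    rw [Real.rpow_def_of_pos ha0, mul_one_div]
  simp only [hrw x hx, hrw y hy]
  have hu : 0 < b / y := by positivity
  have huv : b / y < b / x := by
    apply div_lt_div_of_pos_left hb hx hxy
  have key := aux_secant (b / y) (b / x) hu huv
  -- key : (b/x) * (exp (b/y) - 1) < (b/y) * (exp (b/x) - 1)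
  have h2 := mul_lt_mul_of_pos_left key (by positivity : 0 < x * y / b)
  have e1 : x * y / b * (b / x * (Real.exp (b / y) - 1)) = y * (Real.exp (b / y) - 1) := by
    field_simp
  have e2 : x * y / b * (b / y * (Real.exp (b / x) - 1)) = x * (Real.exp (b / x) - 1) := by
    field_simp
  rw [e1, e2] at h2
  exact h2

theorem stmt_3 (a : ℝ) (ha : 1 < a) :
    StrictAntiOn (fun x : ℝ => x * (a ^ (1 / x) - 1)) (Set.Ioi 0) ∧
    ∀ ε : ℝ, 0 < ε → ∀ m n : ℕ, 1 ≤ m → m < n →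
      (n : ℝ) * (1 + ε) * (((1 + ε) / ε) ^ ((1 : ℝ) / n) - 1)
        < (m : ℝ) * (1 + ε) * (((1 + ε) / ε) ^ ((1 : ℝ) / m) - 1) := by
  refine ⟨aux_anti a ha, ?_⟩
  intro ε hε m n hm hmn
  have hA : 1 < (1 + ε) / ε := by
    rw [lt_div_iff₀ hε]; linarith
  have hm0 : (0:ℝ) < m := by exact_mod_cast hm
  have hmn' : (m:ℝ) < n := by exact_mod_cast hmn
  have h := aux_anti ((1 + ε) / ε) hA (Set.mem_Ioi.mpr hm0)
    (Set.mem_Ioi.mpr (hm0.trans hmn')) hmn'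
  simp only at h
  nlinarith [h]
end

section
/- For every real ε with 0 < ε ≤ 1 and every integer m ≥ 1, one has m · (1+ε) · (((1+ε)/ε)^{1/m} − 1) ≥ 2 · ln 2, and 2 · ln 2 > 4/3. -/
theorem stmt_6 (ε : ℝ) (hε : 0 < ε) (hε1 : ε ≤ 1) (m : ℕ) (hm : 1 ≤ m) :
    (m : ℝ) * (1 + ε) * (((1 + ε) / ε) ^ ((1 : ℝ) / m) - 1) ≥ 2 * Real.log 2 ∧
    2 * Real.log 2 > 4 / 3 := by
  have hlog2gt : Real.log 2 > 2 / 3 := by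
    have := Real.log_two_gt_d9; linarith
  have hlog2lt : Real.log 2 < 1 := by
    have := Real.log_two_lt_d9; linarith
  refine ⟨?_, by linarith⟩
  set s : ℝ := (1 + ε) / ε with hs
  have hm0 : (0 : ℝ) < m := by exact_mod_cast Nat.lt_of_lt_of_le Nat.zero_lt_one hm
  have hs2 : 2 ≤ s := by
    rw [hs, le_div_iff₀ hε]; linarith
  have hs0 : 0 < s := by linarith
  -- Step A: s ^ (1/m) - 1 ≥ log s / m
  have hA : s ^ ((1 : ℝ) / m) - 1 ≥ Real.log s / m := by
    rw [Real.rpow_def_of_pos hs0, mul_one_div]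
    have h := Real.add_one_le_exp (Real.log s / m)
    linarith
  -- Step B: log s ≥ log 2 + 1 - 2/s
  have hB : Real.log s ≥ Real.log 2 + 1 - 2 / s := by
    have h1 : Real.log (2 / s) ≤ 2 / s - 1 := Real.log_le_sub_one_of_pos (by positivity)
    have h2 : Real.log (2 / s) = Real.log 2 - Real.log s :=
      Real.log_div two_ne_zero (ne_of_gt hs0)
    linarith
  -- key: s * log s ≥ 2 * log 2 * (s - 1)
  have hkey : s * Real.log s ≥ 2 * Real.log 2 * (s - 1) := by
    have h3 : s * (2 / s) = 2 := by field_simp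
    nlinarith [mul_le_mul_of_nonneg_left hB (le_of_lt hs0)]
  have hεs : ε * s = 1 + ε := by
    rw [hs]; field_simp
  -- log s ≥ 0
  have hlogs0 : 0 ≤ Real.log s := Real.log_nonneg (by linarith)
  -- combine
  have hmain : (m : ℝ) * (1 + ε) * (s ^ ((1 : ℝ) / m) - 1) ≥ (1 + ε) * Real.log s := by
    have hmul : (m : ℝ) * (1 + ε) * (Real.log s / m) = (1 + ε) * Real.log s := by
      field_simp
    have : (m : ℝ) * (1 + ε) * (Real.log s / m) ≤
        (m : ℝ) * (1 + ε) * (s ^ ((1 : ℝ) / m) - 1) := by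
      apply mul_le_mul_of_nonneg_left hA
      positivity
    linarith
  have : (1 + ε) * Real.log s ≥ 2 * Real.log 2 := by
    have := mul_le_mul_of_nonneg_left hkey (le_of_lt hε)
    nlinarith
  linarith
end

section
/- For every real ε > 0 and every integer m ≥ 1, one has m · (1+ε) · (((1+ε)/ε)^{1/m} − 1) ≤ (1+ε)/ε, with equality if and only if m = 1. -/
theorem stmt_7 (ε : ℝ) (hε : 0 < ε) (m : ℕ) (hm : 1 ≤ m) :
    (m : ℝ) * (1 + ε) * (((1 + ε) / ε) ^ ((1 : ℝ) / m) - 1) ≤ (1 + ε) / ε ∧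
    ((m : ℝ) * (1 + ε) * (((1 + ε) / ε) ^ ((1 : ℝ) / m) - 1) = (1 + ε) / ε ↔ m = 1) := by
  have hc0 : (0:ℝ) < (1 + ε) / ε := by positivity
  have hc1 : (1:ℝ) < (1 + ε) / ε := by
    rw [lt_div_iff₀ hε]; linarith
  have hm0 : (m:ℝ) ≠ 0 := Nat.cast_ne_zero.mpr (by omega)
  have hmpos : (0:ℝ) < m := Nat.cast_pos.mpr hm
  set t := ((1 + ε) / ε) ^ ((1 : ℝ) / m) with htdef
  have ht1 : 1 < t := by
    rw [htdef]
    exact Real.one_lt_rpow_iff_of_pos hc0 |>.mpr (Or.inl ⟨hc1, by positivity⟩)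
  have htm : t ^ m = (1 + ε) / ε := by
    rw [htdef, ← Real.rpow_natCast _ m, ← Real.rpow_mul hc0.le,
      one_div_mul_cancel hm0, Real.rpow_one]
  have hce : ε * ((1 + ε) / ε) = 1 + ε := by field_simp
  have key : 1 + (m:ℝ) * (t - 1) ≤ t ^ m := by
    have h := one_add_mul_le_pow (a := t - 1) (by linarith) m
    have h2 : (1 : ℝ) + (t - 1) = t := by ring
    rwa [h2] at h
  constructor
  · nlinarith [key, htm, hce, hε, mul_le_mul_of_nonneg_left key (by linarith : (0:ℝ) ≤ ε)]
  · constructor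
    · intro heq
      by_contra hne
      have hm2 : 2 ≤ m := by omega
      have key' : 1 + (m:ℝ) * (t - 1) < t ^ m := by
        have h := one_add_mul_self_lt_rpow_one_add (s := t - 1) (by linarith)
          (by intro h; apply absurd h; intro h; linarith)
          (p := (m:ℝ)) (by exact_mod_cast hm2)
        have h2 : (1 : ℝ) + (t - 1) = t := by ring
        rw [h2, Real.rpow_natCast] at h
        linarith
      nlinarith [key', htm, hce, hε, mul_lt_mul_of_pos_left key' hε]
    · intro h1
      subst h1
      simp only [Nat.cast_one, one_mul]
      rw [htdef]
      norm_num [Real.rpow_one]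
      field_simp
      ring
end

section
/- Let ε > 0 be real, let m ≥ 1 be an integer, let h be an integer with 0 ≤ h ≤ m−1, and let y be real with 1 ≤ y ≤ ((1+ε)/ε)^{1/m}. Set b := ε/(1+ε), x := y · b^{(m−h)/m}, and V := ∑_{i=0}^{h} b^{(m−i)/m} + x · (m−h−1). Then f(m,ε) ≤ V/x ≤ m, where f(m,ε) := (ε/(1+ε)) · ∑_{j=0}^{m−1} ((1+ε)/ε)^{j/m}. -/
/-!
Write `b = ε / (1 + ε) ∈ (0, 1)` and `pᵢ = b ^ ((m - i) / m)`, so that `f(m, ε) = ∑_{j < m} pⱼ`,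
`x = y · p_h` and `V = ∑_{i ≤ h} pᵢ + (m - h - 1) x`. The bound on `y` gives `x ≤ b ^ ((m - h - 1) / m) ≤ 1`;
as also `pⱼ ≤ 1`, splitting `f · x` at `h` gives `f · x ≤ V`. Since `p` is increasing and `y ≥ 1`,
`pᵢ ≤ p_h ≤ x` for `i ≤ h`, hence `V ≤ m x`.
-/

open Finset

section WeightedSums

variable {p : ℕ → ℝ} {m h : ℕ} {x : ℝ}

theorem sum_range_mul_le_sum_range_add_mul (hhm : h + 1 ≤ m) (hp0 : ∀ j < m, 0 ≤ p j)
    (hp1 : ∀ j < m, p j ≤ 1) (hx0 : 0 ≤ x) (hx1 : x ≤ 1) :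
    (∑ j ∈ range m, p j) * x ≤ ∑ j ∈ range (h + 1), p j + x * ((m : ℝ) - h - 1) := by
  have head : ∑ j ∈ range (h + 1), p j * x ≤ ∑ j ∈ range (h + 1), p j :=
    sum_le_sum fun j hj ↦
      mul_le_of_le_one_right (hp0 j (by rw [mem_range] at hj; omega)) hx1
  have tail : ∑ j ∈ Ico (h + 1) m, p j * x ≤ (Ico (h + 1) m).card • x :=
    sum_le_card_nsmul _ _ _ fun j hj ↦
      mul_le_of_le_one_left hx0 (hp1 j (mem_Ico.mp hj).2)
  rw [Nat.card_Ico, nsmul_eq_mul, Nat.cast_sub hhm] at tail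
  rw [sum_mul, ← sum_range_add_sum_Ico _ hhm]
  push_cast at tail
  linarith

theorem sum_range_add_mul_le_mul (hp : ∀ i ≤ h, p i ≤ x) :
    ∑ i ∈ range (h + 1), p i + x * ((m : ℝ) - h - 1) ≤ m * x := by
  have hsum : ∑ i ∈ range (h + 1), p i ≤ (range (h + 1)).card • x :=
    sum_le_card_nsmul _ _ _ fun i hi ↦ hp i (Nat.lt_succ_iff.mp (mem_range.mp hi))
  rw [card_range, nsmul_eq_mul] at hsum
  push_cast at hsum
  linarith

end WeightedSums

namespace Real

variable {b m : ℝ}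

theorem rpow_sub_div_le_one (hb0 : 0 ≤ b) (hb1 : b ≤ 1) (hm : 0 ≤ m) {j : ℝ} (hj : j ≤ m) :
    b ^ ((m - j) / m) ≤ 1 :=
  rpow_le_one hb0 hb1 (div_nonneg (sub_nonneg.mpr hj) hm)

theorem rpow_sub_div_le_rpow_sub_div (hb0 : 0 < b) (hb1 : b ≤ 1) (hm : 0 ≤ m) {i j : ℝ}
    (hij : i ≤ j) : b ^ ((m - i) / m) ≤ b ^ ((m - j) / m) :=
  rpow_le_rpow_of_exponent_ge hb0 hb1 (div_le_div_of_nonneg_right (by linarith) hm)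

theorem inv_rpow_mul_rpow (hb : 0 < b) (s t : ℝ) : b⁻¹ ^ s * b ^ t = b ^ (t - s) := by
  rw [inv_rpow hb.le, rpow_sub hb, inv_mul_eq_div]

theorem mul_inv_rpow_div (hb : 0 < b) (hm : m ≠ 0) (j : ℝ) :
    b * b⁻¹ ^ (j / m) = b ^ ((m - j) / m) := by
  rw [sub_div, div_self hm, ← inv_rpow_mul_rpow hb, rpow_one, mul_comm]

end Real

theorem stmt_8 (ε : ℝ) (hε : 0 < ε) (m : ℕ) (hm : 1 ≤ m) (h : ℕ) (hh : h ≤ m - 1)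
    (y : ℝ) (hy1 : 1 ≤ y) (hy2 : y ≤ ((1 + ε) / ε) ^ ((1 : ℝ) / m)) :
    (ε / (1 + ε)) * ∑ j ∈ Finset.range m, ((1 + ε) / ε) ^ ((j : ℝ) / m)
        ≤ ((∑ i ∈ Finset.range (h + 1), (ε / (1 + ε)) ^ (((m : ℝ) - i) / m))
            + (y * (ε / (1 + ε)) ^ (((m : ℝ) - h) / m)) * ((m : ℝ) - h - 1))
          / (y * (ε / (1 + ε)) ^ (((m : ℝ) - h) / m)) ∧
    ((∑ i ∈ Finset.range (h + 1), (ε / (1 + ε)) ^ (((m : ℝ) - i) / m))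
        + (y * (ε / (1 + ε)) ^ (((m : ℝ) - h) / m)) * ((m : ℝ) - h - 1))
      / (y * (ε / (1 + ε)) ^ (((m : ℝ) - h) / m)) ≤ (m : ℝ) := by
  set b := ε / (1 + ε)
  rw [show (1 + ε) / ε = b⁻¹ from (inv_div _ _).symm] at hy2 ⊢
  have hb0 : 0 < b := by positivity
  have hb1 : b ≤ 1 := div_le_one_of_le₀ (by linarith) (by positivity)
  have hm0 : (0 : ℝ) < m := by exact_mod_cast hm
  have hhm : h + 1 ≤ m := by omega
  set x := y * b ^ (((m : ℝ) - h) / m) with hx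
  have hx0 : 0 < x := by positivity
  have hx1 : x ≤ 1 := calc
    x ≤ b⁻¹ ^ ((1 : ℝ) / m) * b ^ (((m : ℝ) - h) / m) := by rw [hx]; gcongr
    _ = b ^ (((m : ℝ) - (h + 1)) / m) := by rw [Real.inv_rpow_mul_rpow hb0]; ring_nf
    _ ≤ 1 := Real.rpow_sub_div_le_one hb0.le hb1 hm0.le (by exact_mod_cast hhm)
  have hp1 (j : ℕ) (hj : j < m) : b ^ (((m : ℝ) - j) / m) ≤ 1 :=
    Real.rpow_sub_div_le_one hb0.le hb1 hm0.le (by exact_mod_cast hj.le)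
  have hpx (i : ℕ) (hi : i ≤ h) : b ^ (((m : ℝ) - i) / m) ≤ x :=
    (Real.rpow_sub_div_le_rpow_sub_div hb0 hb1 hm0.le (by exact_mod_cast hi)).trans
      (le_mul_of_one_le_left (by positivity) hy1)
  rw [mul_sum, le_div_iff₀ hx0, div_le_iff₀ hx0]
  simp only [Real.mul_inv_rpow_div hb0 hm0.ne']
  exact ⟨sum_range_mul_le_sum_range_add_mul hhm (fun j _ ↦ by positivity) hp1 hx0.le hx1,
    sum_range_add_mul_le_mul hpx⟩
end

section
/- (Horn's feasibility criterion, fractional form.) Let m ≥ 1 be an integer, let t be a real number, and let jobs 1,…,n be given by remaining processing times p_1,…,p_n > 0 and deadlines d_1,…,d_n, with D := max_j d_j. Define V_min(τ) := ∑_{j=1}^{n} max(0, min(p_j, τ − (d_j − p_j))). Then there exist measurable functions x_1,…,x_n : ℝ → [0,1] with x_j(s) = 0 for all s outside [t, d_j], ∑_{j=1}^{n} x_j(s) ≤ m for all s, and ∫ x_j(s) ds = p_j for each j, if and only if d_j ≥ t + p_j for every job j and V_min(τ) ≤ m · (τ − t) for every τ ∈ (t, D]. -/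
open MeasureTheory Set

noncomputable def trm (p d τ : ℝ) : ℝ := max 0 (min p (τ - (d - p)))

lemma trm_nonneg (p d τ : ℝ) : 0 ≤ trm p d τ := le_max_left _ _

lemma trm_mono (p d : ℝ) {τ σ : ℝ} (h : τ ≤ σ) : trm p d τ ≤ trm p d σ :=
  max_le_max le_rfl (min_le_min le_rfl (by linarith))

lemma trm_of_ge (p d τ : ℝ) (hp : 0 ≤ p) (h : d ≤ τ) : trm p d τ = p := by
  unfold trm
  rw [min_eq_left (by linarith), max_eq_right hp]

lemma trm_zero (p d τ : ℝ) (h : τ ≤ d - p) : trm p d τ = 0 := by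
  unfold trm
  exact max_eq_left (min_le_of_right_le (by linarith))

lemma termI {p lam ℓ D D' τ : ℝ} (b : ℝ) (hb : b = min (max (p - lam) 0) ℓ)
    (hp : 0 ≤ p) (hlam : 0 ≤ lam) (hℓ0 : 0 ≤ ℓ) (hℓ : ℓ = D - D')
    (hτ : τ ≤ D' - lam) :
    trm (p - b) D' τ ≤ trm p D τ := by
  rcases le_or_gt (p - lam) 0 with hc | hc
  · have hb0 : b = 0 := by rw [hb, max_eq_right hc, min_eq_left hℓ0]
    subst hb0
    rw [sub_zero, trm_zero p D' τ (by linarith)]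
    exact trm_nonneg _ _ _
  · rw [max_eq_left hc.le] at hb
    rcases le_total (p - lam) ℓ with hcc | hcc
    · rw [min_eq_left hcc] at hb
      have : p - b = lam := by rw [hb]; ring
      rw [this, trm_zero lam D' τ (by linarith)]
      exact trm_nonneg _ _ _
    · rw [min_eq_right hcc] at hb
      rw [hb]
      have harg : τ - (D' - (p - ℓ)) = τ - (D - p) := by rw [hℓ]; ring
      unfold trm
      rw [harg]
      exact max_le_max le_rfl (min_le_min (by linarith) le_rfl)

lemma termII {p lam ℓ D D' τ : ℝ} (b : ℝ) (hb : b = min (max (p - lam) 0) ℓ)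
    (hp : 0 ≤ p) (hlam : 0 ≤ lam) (hℓ0 : 0 ≤ ℓ) (hℓ : ℓ = D - D')
    (hτ : D' - lam < τ) :
    trm (p - b) D' τ + b ≤ trm p D (τ + ℓ) := by
  rcases le_or_gt (p - lam) 0 with hc | hc
  · have hb0 : b = 0 := by rw [hb, max_eq_right hc, min_eq_left hℓ0]
    subst hb0
    rw [sub_zero, add_zero]
    have harg : τ - (D' - p) = τ + ℓ - (D - p) := by rw [hℓ]; ring
    unfold trm; rw [harg]
  · rw [max_eq_left hc.le] at hb
    rcases le_total (p - lam) ℓ with hcc | hcc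
    · rw [min_eq_left hcc] at hb
      have hpb : p - b = lam := by rw [hb]; ring
      rw [hpb, hb]
      have h1 : trm lam D' τ = min lam (τ - (D' - lam)) :=
        max_eq_right (le_min hlam (by linarith))
      rw [h1, ← min_add_add_right]
      have e1 : lam + (p - lam) = p := by ring
      have e2 : τ - (D' - lam) + (p - lam) = τ + ℓ - (D - p) := by rw [hℓ]; ring
      rw [e1, e2]
      exact le_max_right _ _
    · rw [min_eq_right hcc] at hb
      rw [hb]
      have h1 : trm (p - ℓ) D' τ = min (p - ℓ) (τ - (D' - (p - ℓ))) :=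
        max_eq_right (le_min (by linarith) (by linarith))
      rw [h1, ← min_add_add_right]
      have e1 : p - ℓ + ℓ = p := by ring
      have e2 : τ - (D' - (p - ℓ)) + ℓ = τ + ℓ - (D - p) := by rw [hℓ]; ring
      rw [e1, e2]
      exact le_max_right _ _

lemma baseSchedule (m : ℕ) (n : ℕ) (t D : ℝ) (p : Fin n → ℝ)
    (hp : ∀ j, 0 ≤ p j) (hd : ∀ j, t + p j ≤ D)
    (hsum : (∑ j, p j) ≤ (m : ℝ) * (D - t)) :
    ∃ x : Fin n → ℝ → ℝ,
      (∀ j, Measurable (x j)) ∧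
      (∀ j, Integrable (x j)) ∧
      (∀ j s, x j s ∈ Icc (0:ℝ) 1) ∧
      (∀ j s, s ∉ Icc t D → x j s = 0) ∧
      (∀ s, (∑ j, x j s) ≤ (m : ℝ)) ∧
      (∀ j, (∫ s, x j s) = p j) := by
  rcases le_or_gt D t with hDt | hDt
  · have hp0 : ∀ j, p j = 0 := fun j => le_antisymm (by have := hd j; linarith) (hp j)
    refine ⟨fun _ _ => 0, fun j => measurable_const, fun j => integrable_zero _ _ _,
      fun j s => ⟨le_rfl, zero_le_one⟩, fun j s _ => rfl, fun s => ?_, fun j => ?_⟩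
    · simp only [Finset.sum_const_zero]; positivity
    · simp [hp0 j]
  · have hD0 : (0:ℝ) < D - t := by linarith
    refine ⟨fun j => (Ioc t D).indicator (fun _ => p j / (D - t)), ?_, ?_, ?_, ?_, ?_, ?_⟩
    · exact fun j => measurable_const.indicator measurableSet_Ioc
    · intro j
      refine (integrable_indicator_iff measurableSet_Ioc).2 (integrableOn_const (lt_top_iff_ne_top.1 ?_))
      rw [Real.volume_Ioc]; exact ENNReal.ofReal_lt_top
    · intro j s
      show (Ioc t D).indicator (fun _ => p j / (D - t)) s ∈ Icc (0:ℝ) 1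
      by_cases hs : s ∈ Ioc t D
      · rw [indicator_of_mem hs]
        constructor
        · exact div_nonneg (hp j) hD0.le
        · rw [div_le_one hD0]; have := hd j; linarith
      · rw [indicator_of_notMem hs]; exact ⟨le_rfl, zero_le_one⟩
    · intro j s hs
      exact indicator_of_notMem (fun h => hs ⟨h.1.le, h.2⟩) _
    · intro s
      by_cases hs : s ∈ Ioc t D
      · simp only [indicator_of_mem hs]
        rw [← Finset.sum_div, div_le_iff₀ hD0]
        linarith
      · simp only [indicator_of_notMem hs, Finset.sum_const_zero]
        positivity
    · intro j
      rw [integral_indicator_const _ measurableSet_Ioc, measureReal_def, Real.volume_Ioc,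
        ENNReal.toReal_ofReal hD0.le, smul_eq_mul]
      field_simp

lemma auxSched (m : ℕ) (hm : 1 ≤ m) (n : ℕ) (hn : 1 ≤ n) :
    ∀ (k : ℕ) (t : ℝ) (p d : Fin n → ℝ),
      (Finset.image d Finset.univ).card ≤ k →
      (∀ j, 0 ≤ p j) →
      (∀ j, t + p j ≤ d j) →
      (∀ τ : ℝ, t < τ → (∑ j, trm (p j) (d j) τ) ≤ (m : ℝ) * (τ - t)) →
      ∃ x : Fin n → ℝ → ℝ,
        (∀ j, Measurable (x j)) ∧
        (∀ j, Integrable (x j)) ∧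
        (∀ j s, x j s ∈ Icc (0:ℝ) 1) ∧
        (∀ j s, s ∉ Icc t (d j) → x j s = 0) ∧
        (∀ s, (∑ j, x j s) ≤ (m : ℝ)) ∧
        (∀ j, (∫ s, x j s) = p j) := by
  have hne : Nonempty (Fin n) := ⟨⟨0, hn⟩⟩
  intro k
  induction k with
  | zero =>
    intro t p d hcard _ _ _
    exfalso
    have : 0 < (Finset.image d Finset.univ).card :=
      Finset.card_pos.2 (Finset.univ_nonempty.image d)
    omega
  | succ k IH =>
    intro t p d hcard hp hd hH
    by_cases hall : ∀ j j' : Fin n, d j = d j'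
    · -- all deadlines equal: base case
      obtain ⟨j0⟩ := hne
      set D := d j0 with hD
      have hallD : ∀ j, d j = D := fun j => hall j j0
      have htD : t ≤ D := le_trans (by have := hp j0; linarith) (hd j0)
      have hsum : (∑ j, p j) ≤ (m : ℝ) * (D - t) := by
        rcases eq_or_lt_of_le htD with he | hlt
        · have : ∀ j, p j = 0 := fun j => le_antisymm
            (by have := hd j; rw [hallD j] at this; linarith) (hp j)
          simp only [this, Finset.sum_const_zero]
          rw [← he]; simp
        · have := hH D hlt
          calc (∑ j, p j) = ∑ j, trm (p j) (d j) D := by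
                refine Finset.sum_congr rfl fun j _ => ?_
                rw [trm_of_ge _ _ _ (hp j) (by rw [hallD j])]
            _ ≤ (m : ℝ) * (D - t) := this
      obtain ⟨x, h1, h2, h3, h4, h5, h6⟩ :=
        baseSchedule m n t D p hp (fun j => by rw [← hallD j]; exact hd j) hsum
      exact ⟨x, h1, h2, h3, fun j s hs => h4 j s (by rwa [hallD j] at hs), h5, h6⟩
    · -- peel off last interval
      push_neg at hall
      obtain ⟨j1, j2, hne12⟩ := hall
      have hSne : (Finset.image d Finset.univ).Nonempty := Finset.univ_nonempty.image d
      set S := Finset.image d Finset.univ with hS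
      set D := S.max' hSne with hDdef
      have hmemS : ∀ j, d j ∈ S := fun j => Finset.mem_image_of_mem d (Finset.mem_univ j)
      have hdleD : ∀ j, d j ≤ D := fun j => Finset.le_max' _ _ (hmemS j)
      have hexlt : ∃ j, d j ≠ D := by
        by_contra h
        push_neg at h
        exact hne12 ((h j1).trans (h j2).symm)
      obtain ⟨j3, hj3⟩ := hexlt
      have hS'ne : (S.erase D).Nonempty := ⟨d j3, Finset.mem_erase.2 ⟨hj3, hmemS j3⟩⟩
      set D' := (S.erase D).max' hS'ne with hD'def
      have hD'mem : D' ∈ S.erase D := Finset.max'_mem _ _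
      have hD'ltD : D' < D :=
        lt_of_le_of_ne (Finset.le_max' _ _ (Finset.mem_of_mem_erase hD'mem))
          (Finset.ne_of_mem_erase hD'mem)
      have hdleD' : ∀ j, d j ≠ D → d j ≤ D' :=
        fun j h => Finset.le_max' _ _ (Finset.mem_erase.2 ⟨h, hmemS j⟩)
      have htD' : t ≤ D' := by
        obtain ⟨j4, _, hj4⟩ := Finset.mem_image.1 (Finset.mem_of_mem_erase hD'mem)
        calc t ≤ t + p j4 := by linarith [hp j4]
          _ ≤ d j4 := hd j4
          _ = D' := hj4
      have htD : t < D := lt_of_le_of_lt htD' hD'ltD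
      set ℓ : ℝ := D - D' with hℓdef
      have hℓpos : 0 < ℓ := by simp only [hℓdef]; linarith
      set L : ℝ := D' - t with hLdef
      have hL0 : 0 ≤ L := by simp only [hLdef]; linarith
      set f : ℝ → ℝ := fun lam => ∑ j, if d j = D then min (max (p j - lam) 0) ℓ else 0
        with hfdef
      have hfcont : Continuous f := by
        apply continuous_finset_sum
        intro j _
        by_cases h : d j = D
        · simp only [h, if_true]
          fun_prop
        · simp only [h, if_false]
          exact continuous_const
      -- total processing time bound
      have hPsum : (∑ j, p j) ≤ (m : ℝ) * (D - t) := by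
        have := hH D htD
        calc (∑ j, p j) = ∑ j, trm (p j) (d j) D :=
              Finset.sum_congr rfl fun j _ => (trm_of_ge _ _ _ (hp j) (hdleD j)).symm
          _ ≤ (m : ℝ) * (D - t) := this
      -- f L ≤ m ℓ
      have hfL : f L ≤ (m : ℝ) * ℓ := by
        set G := Finset.univ.filter (fun j => d j = D ∧ L < p j) with hGdef
        have hfLeq : f L ≤ ∑ j ∈ G, min (p j - L) ℓ := by
          rw [hfdef]
          rw [Finset.sum_filter]
          apply Finset.sum_le_sum
          intro j _
          by_cases h : d j = D
          · by_cases h2 : L < p j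
            · simp only [h, h2, if_true, and_self]
              have : max (p j - L) 0 = p j - L := max_eq_left (by linarith)
              rw [this]
            · simp only [h, h2, if_true, and_false, if_false]
              have : max (p j - L) 0 = 0 := max_eq_right (by push_neg at h2; linarith)
              rw [this, min_eq_left hℓpos.le]
          · simp only [h, if_false, false_and, if_false]
            exact le_rfl
        rcases le_or_gt (m : ℝ) (G.card : ℝ) with hG | hG
        · have h1 : ∑ j ∈ G, min (p j - L) ℓ ≤ ∑ j ∈ G, (p j - L) :=
            Finset.sum_le_sum fun j _ => min_le_left _ _
          have h2 : ∑ j ∈ G, (p j - L) = (∑ j ∈ G, p j) - G.card * L := by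
            rw [Finset.sum_sub_distrib, Finset.sum_const, nsmul_eq_mul]
          have h3 : (∑ j ∈ G, p j) ≤ ∑ j, p j :=
            Finset.sum_le_sum_of_subset_of_nonneg (Finset.filter_subset _ _)
              (fun j _ _ => hp j)
          have h4 : (m : ℝ) * L ≤ (G.card : ℝ) * L := mul_le_mul_of_nonneg_right hG hL0
          have hDt : D - t = ℓ + L := by simp only [hℓdef, hLdef]; ring
          rw [hDt] at hPsum
          calc f L ≤ (∑ j ∈ G, p j) - G.card * L := by linarith
            _ ≤ (m:ℝ) * ℓ := by linarith [mul_add (m:ℝ) ℓ L]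
        · have h1 : ∑ j ∈ G, min (p j - L) ℓ ≤ ∑ j ∈ G, ℓ :=
            Finset.sum_le_sum fun j _ => min_le_right _ _
          have h2 : ∑ j ∈ G, ℓ = (G.card : ℝ) * ℓ := by
            rw [Finset.sum_const, nsmul_eq_mul]
          calc f L ≤ (G.card : ℝ) * ℓ := by linarith
            _ ≤ (m:ℝ) * ℓ := mul_le_mul_of_nonneg_right hG.le hℓpos.le
      -- choose the water level lam
      have hlamex : ∃ lam, 0 ≤ lam ∧ lam ≤ L ∧ f lam ≤ (m:ℝ) * ℓ ∧
          (lam = 0 ∨ f lam = (m:ℝ) * ℓ) := by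
        by_cases h1 : f 0 ≤ (m:ℝ) * ℓ
        · exact ⟨0, le_rfl, hL0, h1, Or.inl rfl⟩
        · push_neg at h1
          have hsub := intermediate_value_Icc' hL0 hfcont.continuousOn
          have hmem : (m:ℝ) * ℓ ∈ Icc (f L) (f 0) := ⟨hfL, h1.le⟩
          obtain ⟨lam, hlamI, hflam⟩ := hsub hmem
          exact ⟨lam, hlamI.1, hlamI.2, hflam.le, Or.inr hflam⟩
      obtain ⟨lam, hlam0, hlamL, hflam, hkey⟩ := hlamex
      set b : Fin n → ℝ := fun j => if d j = D then min (max (p j - lam) 0) ℓ else 0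
        with hbdef
      have hsumb : (∑ j, b j) = f lam := rfl
      have hbval : ∀ j, d j = D → b j = min (max (p j - lam) 0) ℓ :=
        fun j h => by simp only [hbdef, h, if_true]
      have hbval' : ∀ j, d j ≠ D → b j = 0 :=
        fun j h => by simp only [hbdef, h, if_false]
      have hb0 : ∀ j, 0 ≤ b j := by
        intro j
        by_cases h : d j = D
        · rw [hbval j h]
          exact le_min (le_max_right _ _) hℓpos.le
        · rw [hbval' j h]
      have hbℓ : ∀ j, b j ≤ ℓ := by
        intro j
        by_cases h : d j = D
        · rw [hbval j h]; exact min_le_right _ _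
        · rw [hbval' j h]; exact hℓpos.le
      have hbp : ∀ j, b j ≤ p j := by
        intro j
        by_cases h : d j = D
        · rw [hbval j h]
          exact le_trans (min_le_left _ _) (max_le (by linarith) (hp j))
        · rw [hbval' j h]; exact hp j
      set p' : Fin n → ℝ := fun j => p j - b j with hp'def
      set d' : Fin n → ℝ := fun j => if d j = D then D' else d j with hd'def
      have hdval : ∀ j, d j = D → d' j = D' :=
        fun j h => by simp only [hd'def, h, if_true]
      have hdval' : ∀ j, d j ≠ D → d' j = d j :=
        fun j h => by simp only [hd'def, h, if_false]
      have hp'val : ∀ j, p' j = p j - b j := fun j => rfl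
      have hp'0 : ∀ j, 0 ≤ p' j := fun j => by
        rw [hp'val j]; linarith [hbp j]
      have hd'le : ∀ j, d' j ≤ d j := by
        intro j
        by_cases h : d j = D
        · rw [hdval j h, h]; linarith
        · rw [hdval' j h]
      have hd'leD' : ∀ j, d' j ≤ D' := by
        intro j
        by_cases h : d j = D
        · rw [hdval j h]
        · rw [hdval' j h]; exact hdleD' j h
      have hLval : L = D' - t := hLdef
      have hd' : ∀ j, t + p' j ≤ d' j := by
        intro j
        by_cases h : d j = D
        · rw [hdval j h, hp'val j]
          have hbv := hbval j h
          rcases min_choice (max (p j - lam) 0) ℓ with hc | hc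
          · rw [hc] at hbv
            rcases max_choice (p j - lam) 0 with hc2 | hc2
            · rw [hc2] at hbv
              have : lam ≤ D' - t := hLval ▸ hlamL
              linarith
            · rw [hc2] at hbv
              have h3 : p j - lam ≤ 0 := by
                have := le_max_left (p j - lam) 0
                rw [hc2] at this; exact this
              have : lam ≤ D' - t := hLval ▸ hlamL
              linarith
          · rw [hc] at hbv
            have h4 := hd j
            rw [h] at h4
            have h5 : ℓ = D - D' := hℓdef
            linarith
        · rw [hdval' j h, hp'val j, hbval' j h]
          have := hd j
          linarith
      have hcard' : (Finset.image d' Finset.univ).card ≤ k := by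
        have hsub : Finset.image d' Finset.univ ⊆ S.erase D := by
          intro e he
          obtain ⟨j, _, hj⟩ := Finset.mem_image.1 he
          by_cases h : d j = D
          · rw [hdval j h] at hj
            rw [← hj]
            exact hD'mem
          · rw [hdval' j h] at hj
            exact Finset.mem_erase.2 ⟨hj ▸ h, hj ▸ hmemS j⟩
        have h1 := Finset.card_le_card hsub
        have h2 : (S.erase D).card = S.card - 1 :=
          Finset.card_erase_of_mem (S.max'_mem hSne)
        omega
      -- the reduced Horn condition
      have hH' : ∀ τ : ℝ, t < τ → (∑ j, trm (p' j) (d' j) τ) ≤ (m : ℝ) * (τ - t) := by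
        have hcore : ∀ τ : ℝ, t < τ → τ ≤ D' →
            (∑ j, trm (p' j) (d' j) τ) ≤ (m : ℝ) * (τ - t) := by
          intro τ htτ hτD'
          rcases le_or_gt τ (D' - lam) with hI | hII
          · -- Branch I : termwise comparison at τ
            calc (∑ j, trm (p' j) (d' j) τ) ≤ ∑ j, trm (p j) (d j) τ := by
                  apply Finset.sum_le_sum
                  intro j _
                  by_cases h : d j = D
                  · rw [hdval j h, hp'val j, h]
                    exact termI (b j) (hbval j h) (hp j) hlam0 hℓpos.le hℓdef hI
                  · rw [hdval' j h, hp'val j, hbval' j h, sub_zero]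
              _ ≤ (m : ℝ) * (τ - t) := hH τ htτ
          · -- Branch II : shift by ℓ
            have hlampos : 0 < lam := by linarith
            have hkey' : f lam = (m:ℝ) * ℓ := by
              rcases hkey with h | h
              · exfalso; rw [h] at hlampos; exact lt_irrefl _ hlampos
              · exact h
            have hstep : (∑ j, (trm (p' j) (d' j) τ + b j)) ≤
                ∑ j, trm (p j) (d j) (τ + ℓ) := by
              apply Finset.sum_le_sum
              intro j _
              by_cases h : d j = D
              · rw [hdval j h, hp'val j, h]
                exact termII (b j) (hbval j h) (hp j) hlam0 hℓpos.le hℓdef hII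
              · rw [hdval' j h, hp'val j, hbval' j h, sub_zero, add_zero]
                exact trm_mono _ _ (by linarith)
            have hsplit : (∑ j, (trm (p' j) (d' j) τ + b j)) =
                (∑ j, trm (p' j) (d' j) τ) + ∑ j, b j := Finset.sum_add_distrib
            have hHσ := hH (τ + ℓ) (by linarith)
            rw [hsplit, hsumb, hkey'] at hstep
            have : (m:ℝ) * (τ + ℓ - t) = (m:ℝ) * (τ - t) + (m:ℝ) * ℓ := by ring
            linarith
        intro τ htτ
        rcases le_or_gt τ D' with hτD' | hτD'
        · exact hcore τ htτ hτD'
        · have hval : (∑ j, trm (p' j) (d' j) τ) = ∑ j, p' j :=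
            Finset.sum_congr rfl fun j _ =>
              trm_of_ge _ _ _ (hp'0 j) (le_trans (hd'leD' j) hτD'.le)
          rw [hval]
          rcases lt_or_ge t D' with hlt | hle
          · have h1 : (∑ j, p' j) ≤ (m:ℝ) * (D' - t) := by
              have := hcore D' hlt le_rfl
              rwa [Finset.sum_congr rfl
                (fun j _ => trm_of_ge (p' j) (d' j) D' (hp'0 j) (hd'leD' j))] at this
            calc (∑ j, p' j) ≤ (m:ℝ) * (D' - t) := h1
              _ ≤ (m:ℝ) * (τ - t) := by
                exact mul_le_mul_of_nonneg_left (by linarith) (by positivity)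
          · have hD't : D' = t := le_antisymm hle htD'
            have : ∀ j, p' j = 0 := by
              intro j
              have h1 := hd' j
              have h2 := hd'leD' j
              have h3 := hp'0 j
              rw [hD't] at h2
              linarith
            simp only [this, Finset.sum_const_zero]
            exact mul_nonneg (by positivity) (by linarith)
      -- apply induction hypothesis
      obtain ⟨x', hx'meas, hx'intg, hx'01, hx'supp, hx'sum, hx'val⟩ :=
        IH t p' d' hcard' hp'0 hd' hH'
      -- the last-interval piece
      set g : Fin n → ℝ → ℝ := fun j => (Ioc D' D).indicator (fun _ => b j / ℓ)
        with hgdef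
      have hgmeas : ∀ j, Measurable (g j) :=
        fun j => measurable_const.indicator measurableSet_Ioc
      have hgint : ∀ j, Integrable (g j) := by
        intro j
        refine (integrable_indicator_iff measurableSet_Ioc).2 (integrableOn_const (lt_top_iff_ne_top.1 ?_))
        rw [Real.volume_Ioc]; exact ENNReal.ofReal_lt_top
      have hx'zero : ∀ j s, s ∈ Ioc D' D → x' j s = 0 := by
        intro j s hs
        apply hx'supp j s
        intro hmem
        exact absurd hmem.2 (not_le.2 (lt_of_le_of_lt (hd'leD' j) hs.1))
      refine ⟨fun j s => x' j s + g j s, ?_, ?_, ?_, ?_, ?_, ?_⟩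
      · exact fun j => (hx'meas j).add (hgmeas j)
      · exact fun j => (hx'intg j).add (hgint j)
      · intro j s
        show x' j s + g j s ∈ Icc (0:ℝ) 1
        by_cases hs : s ∈ Ioc D' D
        · have hgv : g j s = b j / ℓ := indicator_of_mem hs _
          rw [hx'zero j s hs, zero_add, hgv]
          exact ⟨div_nonneg (hb0 j) hℓpos.le, (div_le_one hℓpos).2 (hbℓ j)⟩
        · have : g j s = 0 := indicator_of_notMem hs _
          rw [this, add_zero]
          exact hx'01 j s
      · intro j s hs
        show x' j s + g j s = 0
        have h1 : x' j s = 0 := by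
          apply hx'supp j s
          intro hmem
          exact hs ⟨hmem.1, le_trans hmem.2 (hd'le j)⟩
        have h2 : g j s = 0 := by
          by_cases h : d j = D
          · apply indicator_of_notMem
            intro hmem
            exact hs ⟨le_trans htD' hmem.1.le, h ▸ hmem.2⟩
          · show (Ioc D' D).indicator (fun _ => b j / ℓ) s = 0
            rw [hbval' j h]
            simp
        rw [h1, h2, add_zero]
      · intro s
        show (∑ j, (x' j s + g j s)) ≤ (m : ℝ)
        by_cases hs : s ∈ Ioc D' D
        · have hv : ∀ j : Fin n, x' j s + g j s = b j / ℓ := by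
            intro j
            have hgv : g j s = b j / ℓ := indicator_of_mem hs _
            rw [hx'zero j s hs, zero_add, hgv]
          rw [Finset.sum_congr rfl fun j _ => hv j, ← Finset.sum_div,
            div_le_iff₀ hℓpos, hsumb]
          linarith
        · have hv : ∀ j : Fin n, x' j s + g j s = x' j s := by
            intro j
            have hgv : g j s = 0 := indicator_of_notMem hs _
            rw [hgv, add_zero]
          rw [Finset.sum_congr rfl fun j _ => hv j]
          exact hx'sum s
      · intro j
        show (∫ s, (x' j s + g j s)) = p j
        have hgval : (∫ s, g j s) = b j := by
          show (∫ s, (Ioc D' D).indicator (fun _ => b j / ℓ) s) = b j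
          rw [integral_indicator_const _ measurableSet_Ioc, measureReal_def, Real.volume_Ioc,
            ENNReal.toReal_ofReal (by linarith), smul_eq_mul]
          have h5 : ℓ = D - D' := hℓdef
          rw [← h5]
          field_simp
        rw [integral_add (hx'intg j) (hgint j), hx'val j, hgval, hp'val j]
        ring

lemma toReal_ofReal_le_max (a : ℝ) : (ENNReal.ofReal a).toReal ≤ max a 0 := by
  rcases le_or_gt a 0 with h | h
  · rw [ENNReal.ofReal_eq_zero.2 h]; simp
  · rw [ENNReal.toReal_ofReal h.le]; exact le_max_left _ _

/-- Horn's feasibility criterion for preemptive scheduling with deadlines on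
`m` parallel identical machines, fractional form. -/
theorem stmt_11 (m : ℕ) (hm : 1 ≤ m) (t : ℝ) (n : ℕ) (hn : 1 ≤ n)
    (p d : Fin n → ℝ) (hp : ∀ j, 0 < p j) (D : ℝ)
    (hD : IsGreatest (Set.range d) D) :
    (∃ x : Fin n → ℝ → ℝ,
        (∀ j, Measurable (x j)) ∧
        (∀ j s, x j s ∈ Set.Icc (0 : ℝ) 1) ∧
        (∀ j s, s ∉ Set.Icc t (d j) → x j s = 0) ∧
        (∀ s, (∑ j, x j s) ≤ (m : ℝ)) ∧
        (∀ j, (∫ s, x j s) = p j)) ↔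
      ((∀ j, d j ≥ t + p j) ∧
        ∀ τ ∈ Set.Ioc t D,
          (∑ j, max 0 (min (p j) (τ - (d j - p j)))) ≤ (m : ℝ) * (τ - t)) := by
  have hdleD : ∀ j, d j ≤ D := fun j => hD.2 ⟨j, rfl⟩
  constructor
  · rintro ⟨x, hmeas, h01, hsupp, hsumle, hint⟩
    -- integrability
    have hgint : ∀ (a b : ℝ), Integrable ((Icc a b).indicator (fun _ => (1:ℝ))) := by
      intro a b
      refine (integrable_indicator_iff measurableSet_Icc).2 (integrableOn_const (lt_top_iff_ne_top.1 ?_))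
      rw [Real.volume_Icc]; exact ENNReal.ofReal_lt_top
    have hbound : ∀ j s, x j s ≤ (Icc t (d j)).indicator (fun _ => (1:ℝ)) s := by
      intro j s
      by_cases hs : s ∈ Icc t (d j)
      · rw [indicator_of_mem hs]; exact (h01 j s).2
      · rw [hsupp j s hs, indicator_of_notMem hs]
    have hxint : ∀ j, Integrable (x j) := by
      intro j
      refine (hgint t (d j)).mono' (hmeas j).aestronglyMeasurable (ae_of_all _ fun s => ?_)
      rw [Real.norm_eq_abs, abs_of_nonneg (h01 j s).1]
      exact hbound j s
    have hdge : ∀ j, d j ≥ t + p j := by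
      intro j
      have h1 : p j ≤ (volume (Icc t (d j))).toReal := by
        rw [← hint j]
        calc (∫ s, x j s) ≤ ∫ s, (Icc t (d j)).indicator (fun _ => (1:ℝ)) s :=
              integral_mono (hxint j) (hgint t (d j)) (hbound j)
          _ = (volume (Icc t (d j))).toReal := by
              rw [integral_indicator_const _ measurableSet_Icc, smul_eq_mul, mul_one, measureReal_def]
      rw [Real.volume_Icc] at h1
      rcases le_or_gt (d j - t) 0 with h2 | h2
      · exfalso
        rw [ENNReal.ofReal_eq_zero.2 h2] at h1
        simp at h1
        linarith [hp j]
      · rw [ENNReal.toReal_ofReal h2.le] at h1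
        linarith
    refine ⟨hdge, ?_⟩
    rintro τ ⟨htτ, hτD⟩
    -- split each job's integral at τ
    have hA0 : ∀ j, 0 ≤ ∫ s in Iio τ, x j s :=
      fun j => setIntegral_nonneg measurableSet_Iio (fun s _ => (h01 j s).1)
    have hterm : ∀ j, max 0 (min (p j) (τ - (d j - p j))) ≤ ∫ s in Iio τ, x j s := by
      intro j
      have hsplit : (∫ s in Iio τ, x j s) + (∫ s in Ici τ, x j s) = p j := by
        rw [intervalIntegral.integral_Iio_add_Ici (hxint j).integrableOn
          (hxint j).integrableOn]
        exact hint j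
      have hB : (∫ s in Ici τ, x j s) ≤ max (d j - τ) 0 := by
        have hmono : (∫ s in Ici τ, x j s) ≤
            ∫ s in Ici τ, (Icc τ (d j)).indicator (fun _ => (1:ℝ)) s := by
          refine setIntegral_mono_on (hxint j).integrableOn
            (hgint τ (d j)).integrableOn measurableSet_Ici ?_
          intro s hs
          by_cases hsd : s ≤ d j
          · by_cases hsm : s ∈ Icc τ (d j)
            · rw [indicator_of_mem hsm]; exact (h01 j s).2
            · exfalso; exact hsm ⟨hs, hsd⟩
          · push_neg at hsd
            rw [hsupp j s (fun hmem => absurd hmem.2 (not_le.2 hsd))]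
            exact indicator_nonneg (fun _ _ => zero_le_one) s
        have heval : (∫ s in Ici τ, (Icc τ (d j)).indicator (fun _ => (1:ℝ)) s) =
            (ENNReal.ofReal (d j - τ)).toReal := by
          rw [setIntegral_indicator measurableSet_Icc,
            inter_eq_self_of_subset_right (Icc_subset_Ici_self), setIntegral_const, measureReal_def,
            Real.volume_Icc, smul_eq_mul, mul_one]
        calc (∫ s in Ici τ, x j s) ≤ (ENNReal.ofReal (d j - τ)).toReal := by
              rw [← heval]; exact hmono
          _ ≤ max (d j - τ) 0 := toReal_ofReal_le_max _
      apply max_le (hA0 j)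
      have : min (p j) (τ - (d j - p j)) ≤ p j - max (d j - τ) 0 := by
        rcases max_cases (d j - τ) 0 with ⟨h1, h2⟩ | ⟨h1, h2⟩ <;> rw [h1]
        · exact min_le_of_right_le (by linarith)
        · exact min_le_of_left_le (by linarith)
      linarith
    calc (∑ j, max 0 (min (p j) (τ - (d j - p j))))
        ≤ ∑ j, ∫ s in Iio τ, x j s := Finset.sum_le_sum fun j _ => hterm j
      _ = ∫ s in Iio τ, (∑ j, x j s) :=
          (integral_finset_sum _ (fun j _ => (hxint j).integrableOn)).symm
      _ ≤ ∫ s in Iio τ, (Icc t τ).indicator (fun _ => (m:ℝ)) s := by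
          refine setIntegral_mono_on
            (integrable_finset_sum _ (fun j _ => (hxint j).integrableOn))
            ?_ measurableSet_Iio ?_
          · refine (integrable_indicator_iff measurableSet_Icc).2
              (integrableOn_const (lt_top_iff_ne_top.1 ?_))
            refine lt_of_le_of_lt (Measure.restrict_apply_le _ _) ?_
            rw [Real.volume_Icc]; exact ENNReal.ofReal_lt_top
          · intro s hs
            rcases le_or_gt t s with h1 | h1
            · have hmem : s ∈ Icc t τ := ⟨h1, le_of_lt hs⟩
              rw [indicator_of_mem hmem]
              exact hsumle s
            · have hzero : ∀ j : Fin n, x j s = 0 := fun j =>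
                hsupp j s (fun hmem => absurd hmem.1 (not_le.2 h1))
              rw [Finset.sum_congr rfl fun j _ => hzero j, Finset.sum_const_zero]
              exact indicator_nonneg (fun _ _ => by positivity) s
      _ = (m : ℝ) * (τ - t) := by
          rw [setIntegral_indicator measurableSet_Icc]
          have hset : Iio τ ∩ Icc t τ = Ico t τ := by
            ext s
            simp only [mem_inter_iff, mem_Iio, mem_Icc, mem_Ico]
            constructor
            · rintro ⟨h1, h2, h3⟩; exact ⟨h2, h1⟩
            · rintro ⟨h1, h2⟩; exact ⟨h2, h1, h2.le⟩
          rw [hset, setIntegral_const, measureReal_def, Real.volume_Ico, smul_eq_mul,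
            ENNReal.toReal_ofReal (by linarith), mul_comm]
  · rintro ⟨hdge, hHorn⟩
    obtain ⟨jD, hjD⟩ : ∃ j, d j = D := hD.1.imp (fun j h => h)
    have htD : t < D := by
      have h1 := hdge jD
      have h2 := hp jD
      rw [hjD] at h1
      linarith
    have hHornAll : ∀ τ : ℝ, t < τ → (∑ j, trm (p j) (d j) τ) ≤ (m : ℝ) * (τ - t) := by
      intro τ htτ
      rcases le_or_gt τ D with hτD | hτD
      · exact hHorn τ ⟨htτ, hτD⟩
      · have h1 : (∑ j, trm (p j) (d j) τ) = ∑ j, p j :=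
          Finset.sum_congr rfl fun j _ =>
            trm_of_ge _ _ _ (hp j).le (le_trans (hdleD j) hτD.le)
        have h2 : (∑ j, p j) ≤ (m:ℝ) * (D - t) := by
          have := hHorn D ⟨htD, le_rfl⟩
          calc (∑ j, p j) = ∑ j, trm (p j) (d j) D :=
                Finset.sum_congr rfl fun j _ => (trm_of_ge _ _ _ (hp j).le (hdleD j)).symm
            _ ≤ (m:ℝ) * (D - t) := this
        rw [h1]
        have h3 : (m:ℝ) * (D - t) ≤ (m:ℝ) * (τ - t) :=
          mul_le_mul_of_nonneg_left (by linarith) (by positivity)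
        linarith
    obtain ⟨x, h1, _, h3, h4, h5, h6⟩ :=
      auxSched m hm n hn (Finset.image d Finset.univ).card t p d le_rfl
        (fun j => (hp j).le) (fun j => hdge j) hHornAll
    exact ⟨x, h1, h3, h4, h5, h6⟩
end

section
/- Let m ≥ 1 be an integer, c a real number, and define the sequence p_1 = 1, p_2 = (c−1)/m, and p_{j} = p_{j−1} · (1 + c/m) for 3 ≤ j ≤ m+1. Then for every integer j with 2 ≤ j ≤ m+1, one has 1 + m · p_j = c · ∑_{i=1}^{j−1} p_i. -/
theorem stmt_13 (m : ℕ) (hm : 1 ≤ m) (c : ℝ) (p : ℕ → ℝ)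
    (hp1 : p 1 = 1) (hp2 : p 2 = (c - 1) / m)
    (hrec : ∀ j : ℕ, 3 ≤ j → j ≤ m + 1 → p j = p (j - 1) * (1 + c / m)) :
    ∀ j : ℕ, 2 ≤ j → j ≤ m + 1 →
      1 + (m : ℝ) * p j = c * ∑ i ∈ Finset.Icc 1 (j - 1), p i := by
  have hm0 : (m : ℝ) ≠ 0 := Nat.cast_ne_zero.mpr (by omega)
  intro j hj2
  induction j, hj2 using Nat.le_induction with
  | base =>
    intro _
    simp only [show (2:ℕ) - 1 = 1 from rfl, Finset.Icc_self, Finset.sum_singleton, hp1, hp2]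
    field_simp
    ring
  | succ j hj ih =>
    intro hle
    have hjm : j ≤ m + 1 := by omega
    have ihj := ih hjm
    have hr := hrec (j + 1) (by omega) hle
    simp only [Nat.add_sub_cancel] at hr
    have hsum : ∑ i ∈ Finset.Icc 1 (j + 1 - 1), p i
        = (∑ i ∈ Finset.Icc 1 (j - 1), p i) + p j := by
      rw [show j + 1 - 1 = (j - 1) + 1 from by omega,
        Finset.sum_Icc_succ_top (by omega : 1 ≤ j - 1 + 1),
        show j - 1 + 1 = j from by omega]
    rw [hsum, hr, mul_add c, ← ihj]
    field_simp
    ring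
end

section
/- For every real ε with 0 < ε < 1 and every integer m ≥ 2, there exists a unique real number c > 1 satisfying c/m = (m/((c−1)·ε))^{1/(m−1)} − 1. -/
theorem stmt_15 (ε : ℝ) (hε0 : 0 < ε) (hε1 : ε < 1) (m : ℕ) (hm : 2 ≤ m) :
    ∃! c : ℝ, 1 < c ∧
      c / m = ((m : ℝ) / ((c - 1) * ε)) ^ ((1 : ℝ) / ((m : ℝ) - 1)) - 1 := by
  have hm2 : (2:ℝ) ≤ (m:ℝ) := by exact_mod_cast hm
  have hm0 : (0:ℝ) < m := by linarith
  have hm1 : (0:ℝ) < (m:ℝ) - 1 := by linarith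
  set p : ℝ := 1/((m:ℝ)-1) with hpdef
  have hp : 0 < p := by positivity
  set g : ℝ → ℝ := fun c => c/m - (((m:ℝ)/((c-1)*ε)) ^ p - 1) with hg
  -- strict monotonicity on Ioi 1
  have hmono : StrictMonoOn g (Set.Ioi 1) := by
    intro x hx y hy hxy
    have hx1 : (1:ℝ) < x := hx
    have hy1 : (1:ℝ) < y := hy
    have hdx : 0 < (x-1)*ε := by nlinarith
    have hlt : (m:ℝ)/((y-1)*ε) < (m:ℝ)/((x-1)*ε) :=
      div_lt_div_of_pos_left hm0 hdx (by nlinarith)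
    have hr := Real.rpow_lt_rpow (div_nonneg hm0.le (by nlinarith)) hlt hp
    have hdiv : x/m < y/m := div_lt_div_of_pos_right hxy hm0
    simp only [hg]
    linarith
  -- choose endpoints
  set K : ℝ := (1 + 2/(m:ℝ)) ^ ((m:ℝ) - 1) with hK
  have hKpos : 0 < K := by
    apply Real.rpow_pos_of_pos; positivity
  have hKp : K ^ p = 1 + 2/(m:ℝ) := by
    rw [hK, ← Real.rpow_mul (by positivity)]
    have h1 : ((m:ℝ)-1) * p = 1 := by
      rw [hpdef, mul_one_div, div_self hm1.ne']
    rw [h1, Real.rpow_one]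
  set δ : ℝ := min 1 ((m:ℝ)/(ε*K)) with hδ
  have hδpos : 0 < δ := lt_min one_pos (by positivity)
  have hδ1 : δ ≤ 1 := min_le_left _ _
  set a : ℝ := 1 + δ with ha
  set b : ℝ := 1 + (m:ℝ)/ε with hb
  have ha1 : 1 < a := by simp [ha]; linarith
  have hab : a ≤ b := by
    have : (1:ℝ) ≤ (m:ℝ)/ε := by
      rw [le_div_iff₀ hε0]; linarith
    simp only [ha, hb]; linarith
  have hga : g a ≤ 0 := by
    have hbase : K ≤ (m:ℝ)/((a-1)*ε) := by
      have h1 : (a-1)*ε = δ*ε := by rw [ha]; ring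
      rw [h1]
      rw [le_div_iff₀ (by positivity)]
      have hδ2 : δ ≤ (m:ℝ)/(ε*K) := min_le_right _ _
      calc K * (δ*ε) ≤ K * ((m:ℝ)/(ε*K) * ε) := by
            apply mul_le_mul_of_nonneg_left _ hKpos.le
            exact mul_le_mul_of_nonneg_right hδ2 hε0.le
        _ = (m:ℝ) := by field_simp
    have hr : K ^ p ≤ ((m:ℝ)/((a-1)*ε)) ^ p :=
      Real.rpow_le_rpow hKpos.le hbase hp.le
    rw [hKp] at hr
    have ha2 : a ≤ 2 := by simp only [ha]; linarith
    have haM : a/(m:ℝ) ≤ 2/(m:ℝ) := by gcongr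
    simp only [hg]
    linarith
  have hgb : 0 ≤ g b := by
    have h1 : (b-1)*ε = (m:ℝ) := by
      simp only [hb]; field_simp; ring
    have : ((m:ℝ)/((b-1)*ε)) ^ p = 1 := by
      rw [h1, div_self (ne_of_gt hm0), Real.one_rpow]
    have hbpos : 0 < b := by rw [hb]; positivity
    have := div_pos hbpos hm0
    simp only [hg]
    rw [‹((m:ℝ)/((b-1)*ε)) ^ p = 1›]
    linarith
  -- continuity on [a,b]
  have hcont : ContinuousOn g (Set.Icc a b) := by
    apply ContinuousOn.sub
    · exact (continuousOn_id.div_const _)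
    · apply ContinuousOn.sub _ continuousOn_const
      apply ContinuousOn.rpow_const
      · apply ContinuousOn.div continuousOn_const
        · exact ((continuousOn_id.sub continuousOn_const).mul continuousOn_const)
        · intro x hx
          have : 1 < x := lt_of_lt_of_le ha1 hx.1
          exact ne_of_gt (by nlinarith)
      · intro x hx; exact Or.inr hp.le
  have hmem : (0:ℝ) ∈ Set.Icc (g a) (g b) := ⟨hga, hgb⟩
  obtain ⟨c, hcmem, hc0⟩ := intermediate_value_Icc hab hcont hmem
  have hc1 : 1 < c := lt_of_lt_of_le ha1 hcmem.1
  refine ⟨c, ⟨hc1, ?_⟩, ?_⟩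
  · have : g c = 0 := hc0
    simp only [hg] at this
    linarith
  · rintro y ⟨hy1, hyeq⟩
    have hgy : g y = 0 := by simp only [hg]; linarith
    exact hmono.injOn (Set.mem_Ioi.mpr hy1) (Set.mem_Ioi.mpr hc1) (by rw [hgy, hc0])
end
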